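/- arXiv:1503.07229 — 3 statements merged into one kernel-verified Lean document; each statement's English description precedes it below -/
import Mathlib

section
/- Let N ≥ 2, θ real, and j, k, l integers with j = k + l. Then the 2×2 determinant with rows (cos θ - cos(θ + 2jπ/N), cos(2θ) - cos(2θ + 4jπ/N)) and (cos(θ + 2kπ/N) - cos(θ + 2lπ/N), cos(2θ + 4kπ/N) - cos(2θ + 4lπ/N)) equals -16 sin(θ + jπ/N) sin(2θ + 2jπ/N) sin(jπ/N) sin(π(k-l)/N) sin(πl/N) sin(πk/N). -/
open Real

private lemma key (θ u v : ℝ) :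
    (Real.cos θ - Real.cos (θ + 2 * (u + v))) *
      (Real.cos (2 * θ + 4 * u) - Real.cos (2 * θ + 4 * v)) -
    (Real.cos (2 * θ) - Real.cos (2 * θ + 4 * (u + v))) *
      (Real.cos (θ + 2 * u) - Real.cos (θ + 2 * v))
      = -16 * Real.sin (θ + (u + v)) * Real.sin (2 * θ + 2 * (u + v))
          * Real.sin (u + v) * Real.sin (u - v) * Real.sin v * Real.sin u := by
  have h1 : Real.cos θ - Real.cos (θ + 2 * (u + v))
      = 2 * Real.sin (θ + (u + v)) * Real.sin (u + v) := by
    rw [Real.cos_sub_cos, show (θ + (θ + 2 * (u + v))) / 2 = θ + (u + v) by ring,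
      show (θ - (θ + 2 * (u + v))) / 2 = -(u + v) by ring, Real.sin_neg]
    ring
  have h2 : Real.cos (2 * θ) - Real.cos (2 * θ + 4 * (u + v))
      = 2 * Real.sin (2 * θ + 2 * (u + v)) * Real.sin (2 * (u + v)) := by
    rw [Real.cos_sub_cos, show (2 * θ + (2 * θ + 4 * (u + v))) / 2 = 2 * θ + 2 * (u + v) by ring,
      show (2 * θ - (2 * θ + 4 * (u + v))) / 2 = -(2 * (u + v)) by ring, Real.sin_neg]
    ring
  have h3 : Real.cos (θ + 2 * u) - Real.cos (θ + 2 * v)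
      = -2 * Real.sin (θ + (u + v)) * Real.sin (u - v) := by
    rw [Real.cos_sub_cos, show (θ + 2 * u + (θ + 2 * v)) / 2 = θ + (u + v) by ring,
      show (θ + 2 * u - (θ + 2 * v)) / 2 = u - v by ring]
  have h4 : Real.cos (2 * θ + 4 * u) - Real.cos (2 * θ + 4 * v)
      = -2 * Real.sin (2 * θ + 2 * (u + v)) * Real.sin (2 * (u - v)) := by
    rw [Real.cos_sub_cos,
      show (2 * θ + 4 * u + (2 * θ + 4 * v)) / 2 = 2 * θ + 2 * (u + v) by ring,
      show (2 * θ + 4 * u - (2 * θ + 4 * v)) / 2 = 2 * (u - v) by ring]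
  have h7 : Real.cos (u - v) - Real.cos (u + v) = 2 * Real.sin u * Real.sin v := by
    rw [Real.cos_sub_cos, show (u - v + (u + v)) / 2 = u by ring,
      show (u - v - (u + v)) / 2 = -v by ring, Real.sin_neg]
    ring
  rw [h1, h2, h3, h4, Real.sin_two_mul (u + v), Real.sin_two_mul (u - v)]
  linear_combination (-8 * Real.sin (θ + (u + v)) * Real.sin (2 * θ + 2 * (u + v))
    * Real.sin (u + v) * Real.sin (u - v)) * h7

private lemma key2 (θ x y n : ℝ) :
    Matrix.det
      !![Real.cos θ - Real.cos (θ + 2 * (x + y) * π / n),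
          Real.cos (2 * θ) - Real.cos (2 * θ + 4 * (x + y) * π / n);
         Real.cos (θ + 2 * x * π / n) - Real.cos (θ + 2 * y * π / n),
          Real.cos (2 * θ + 4 * x * π / n) - Real.cos (2 * θ + 4 * y * π / n)]
      = -16 * Real.sin (θ + (x + y) * π / n) * Real.sin (2 * θ + 2 * (x + y) * π / n)
          * Real.sin ((x + y) * π / n) * Real.sin (π * (x - y) / n)
          * Real.sin (π * y / n) * Real.sin (π * x / n) := by
  have h := key θ (x * π / n) (y * π / n)
  rw [Matrix.det_fin_two_of]
  rw [show θ + 2 * (x + y) * π / n = θ + 2 * (x * π / n + y * π / n) by ring,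
    show 2 * θ + 4 * (x + y) * π / n = 2 * θ + 4 * (x * π / n + y * π / n) by ring,
    show θ + 2 * x * π / n = θ + 2 * (x * π / n) by ring,
    show θ + 2 * y * π / n = θ + 2 * (y * π / n) by ring,
    show 2 * θ + 4 * x * π / n = 2 * θ + 4 * (x * π / n) by ring,
    show 2 * θ + 4 * y * π / n = 2 * θ + 4 * (y * π / n) by ring,
    show 2 * θ + 2 * (x + y) * π / n = 2 * θ + 2 * (x * π / n + y * π / n) by ring,
    show θ + (x + y) * π / n = θ + (x * π / n + y * π / n) by ring,
    show (x + y) * π / n = x * π / n + y * π / n by ring,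
    show π * (x - y) / n = x * π / n - y * π / n by ring,
    show π * y / n = y * π / n by ring,
    show π * x / n = x * π / n by ring]
  exact h

/-- For j = k + l, the 2×2 determinant with rows
(cos θ - cos(θ+2jπ/N), cos 2θ - cos(2θ+4jπ/N)) and
(cos(θ+2kπ/N) - cos(θ+2lπ/N), cos(2θ+4kπ/N) - cos(2θ+4lπ/N))
equals -16 sin(θ+jπ/N) sin(2θ+2jπ/N) sin(jπ/N) sin(π(k-l)/N) sin(πl/N) sin(πk/N). -/
theorem stmt5 (N : ℕ) (hN : 2 ≤ N) (j k l : ℤ) (hj : j = k + l) (θ : ℝ) :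
    Matrix.det
      !![Real.cos θ - Real.cos (θ + 2 * j * π / N),
          Real.cos (2 * θ) - Real.cos (2 * θ + 4 * j * π / N);
         Real.cos (θ + 2 * k * π / N) - Real.cos (θ + 2 * l * π / N),
          Real.cos (2 * θ + 4 * k * π / N) - Real.cos (2 * θ + 4 * l * π / N)]
      = -16 * Real.sin (θ + j * π / N) * Real.sin (2 * θ + 2 * j * π / N)
          * Real.sin (j * π / N) * Real.sin (π * (k - l) / N)
          * Real.sin (π * l / N) * Real.sin (π * k / N) := by
  subst hj
  have h := key2 θ (k : ℝ) (l : ℝ) (N : ℝ)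
  push_cast
  convert h using 2
end

section
/- Let N ≥ 2 and let j, k, l be pairwise distinct integers in {1, ..., N-1} with j = k + l. For any real θ, at least one of the two quantities sin(θ + jπ/N)·sin(2θ + 2jπ/N) and sin(θ + η + jπ/N)·sin(2θ + 2η + 2jπ/N) is nonzero, provided η is a real number with 0 < η < π/(2N). -/
open Real

private lemma double_sin_zero {x y : ℝ} (h : Real.sin x * Real.sin y = 0)
    (hxy : y = 2 * x) : Real.sin y = 0 := by
  rcases mul_eq_zero.mp h with h1 | h1
  · rw [hxy, Real.sin_two_mul, h1]; ring
  · exact h1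

/-- For pairwise distinct j,k,l in {1,...,N-1} with j = k+l and 0 < η < π/(2N),
for every real θ at least one of sin(θ+jπ/N)·sin(2θ+2jπ/N) and
sin(θ+η+jπ/N)·sin(2θ+2η+2jπ/N) is nonzero. -/
theorem stmt6 (N : ℕ) (hN : 2 ≤ N) (j k l : ℕ)
    (hjk : j ≠ k) (hjl : j ≠ l) (hkl : k ≠ l)
    (hj1 : 1 ≤ j) (hj : j ≤ N - 1)
    (hk1 : 1 ≤ k) (hk : k ≤ N - 1)
    (hl1 : 1 ≤ l) (hl : l ≤ N - 1)
    (hsum : j = k + l)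
    (η : ℝ) (hη0 : 0 < η) (hη : η < π / (2 * N)) (θ : ℝ) :
    Real.sin (θ + j * π / N) * Real.sin (2 * θ + 2 * j * π / N) ≠ 0 ∨
    Real.sin (θ + η + j * π / N) * Real.sin (2 * θ + 2 * η + 2 * j * π / N) ≠ 0 := by
  by_contra h
  push_neg at h
  obtain ⟨h1, h2⟩ := h
  have hs1 : Real.sin (2 * θ + 2 * j * π / N) = 0 :=
    double_sin_zero h1 (by ring)
  have hs2 : Real.sin (2 * θ + 2 * η + 2 * j * π / N) = 0 :=
    double_sin_zero h2 (by ring)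
  obtain ⟨m, hm⟩ := Real.sin_eq_zero_iff.mp hs1
  obtain ⟨n, hn⟩ := Real.sin_eq_zero_iff.mp hs2
  have hηπ : ((n - m : ℤ) : ℝ) * π = 2 * η := by push_cast; linarith
  have hπ : 0 < π := Real.pi_pos
  have hNR : (2 : ℝ) ≤ (N : ℝ) := by exact_mod_cast hN
  have hN0 : (0 : ℝ) < (N : ℝ) := by linarith
  have hηsmall : 2 * η < π := by
    have h1 : η < π / (2 * N) := hη
    have h2 : π / (2 * N) ≤ π / 4 := by
      apply div_le_div_of_nonneg_left hπ.le (by norm_num)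
      linarith
    nlinarith
  have hpos : (0 : ℝ) < ((n - m : ℤ) : ℝ) * π := by rw [hηπ]; linarith
  have hmn : (0 : ℤ) < n - m := by
    by_contra hc
    push_neg at hc
    have : ((n - m : ℤ) : ℝ) ≤ 0 := by exact_mod_cast hc
    nlinarith
  have : (1 : ℝ) ≤ ((n - m : ℤ) : ℝ) := by exact_mod_cast hmn
  nlinarith
end

section
/- Let h : 𝔻 → ℂ be real-analytic on the unit disk with |h(z)| = o(|z|^N) as z → 0, N ≥ 2. Then there is a radius r > 0 and a function w : 𝔻_r → ℂ with w(z)^N = z^N + h(z) for |z| < r, satisfying w(z) = z + o(|z|) as z → 0; moreover w is injective near 0 and its inverse satisfies z = w + o(|w|). -/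
/-!
Take `w z = z * (1 + h z / z ^ N) ^ (1 / N)` with the principal root: `h z / z ^ N → 0`, so
`w z = z + o(|z|)`, and `w ^ N = z ^ N + h` by construction.

The point is injectivity. Since `h = o(|z| ^ N)`, the terms of order `≤ N` of the power series
of `h` at `0` vanish on the diagonal, so `|h a - h b| ≤ C max(|a|, |b|) ^ N |a - b|` near `0`.
If `w a = w b` with `|a| ≤ |b|`, then `a` is close to `b` and
`N / 2 * |b| ^ (N - 1) * |a - b| ≤ |a ^ N - b ^ N| = |h b - h a| ≤ C |b| ^ N |a - b|`,
which forces `a = b` once `|b| < N / (2 C)`. The inverse is `w⁻¹` on the image of a small ball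
and the identity elsewhere; it is `u + o(|u|)` because `|z| ≤ 2 |w z|` on that ball.
-/

open Asymptotics Filter Topology Set Metric Function
open scoped NNReal ENNReal

theorem natCast_mul_pow_pred_mul_pow_le {N j : ℕ} (hj : N < j) {m δ : ℝ} (hm : 0 ≤ m)
    (hmδ : m ≤ δ) : (j : ℝ) * m ^ (j - 1) * δ ^ (N + 1) ≤ (2 * δ) ^ j * m ^ N := by
  obtain ⟨i, rfl⟩ : ∃ i, j = N + 1 + i := ⟨j - (N + 1), by omega⟩
  have hj2 : ((N + 1 + i : ℕ) : ℝ) ≤ 2 ^ (N + 1 + i) := by exact_mod_cast (Nat.lt_two_pow_self).le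
  have hδ : 0 ≤ δ := hm.trans hmδ
  calc ((N + 1 + i : ℕ) : ℝ) * m ^ (N + 1 + i - 1) * δ ^ (N + 1)
      = ((N + 1 + i : ℕ) : ℝ) * m ^ i * (m ^ N * δ ^ (N + 1)) := by
        rw [show N + 1 + i - 1 = N + i by omega, pow_add]; ring
    _ ≤ 2 ^ (N + 1 + i) * δ ^ i * (m ^ N * δ ^ (N + 1)) := by gcongr
    _ = (2 * δ) ^ (N + 1 + i) * m ^ N := by ring

section Analytic

variable {𝕜 E F : Type*} [NontriviallyNormedField 𝕜] [NormedAddCommGroup E] [NormedSpace 𝕜 E]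
  [NormedAddCommGroup F] [NormedSpace 𝕜 F]

theorem ContinuousMultilinearMap.apply_diag_eq_zero_of_isLittleO {n : ℕ} (q : E [×n]→L[𝕜] F)
    (hq : (fun y => q fun _ => y) =o[𝓝 0] fun y => ‖y‖ ^ n) (y : E) : (q fun _ => y) = 0 := by
  have hsmul : Tendsto (fun t : 𝕜 => t • y) (𝓝[≠] 0) (𝓝 0) := by
    simpa using (tendsto_id.smul_const y).mono_left (nhdsWithin_le_nhds (a := (0 : 𝕜)))
  have hscaled := hq.comp_tendsto hsmul
  -- Homogeneity cancels the factor `‖t‖ ^ n` on both sides.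
  have hconst : (fun _ : 𝕜 => q fun _ => y) =o[𝓝[≠] 0] fun _ => ‖y‖ ^ n := by
    refine isLittleO_iff.2 fun ε hε => ?_
    filter_upwards [hscaled.def hε, self_mem_nhdsWithin] with t ht ht0
    have htn : 0 < ‖t‖ ^ n := pow_pos (norm_pos_iff.2 ht0) n
    simp only [Function.comp_def, q.map_smul_univ (fun _ => t) (fun _ => y), Finset.prod_const,
      Finset.card_univ, Fintype.card_fin, norm_smul, norm_pow, mul_pow] at ht
    rw [Real.norm_of_nonneg (by positivity)] at ht ⊢
    exact le_of_mul_le_mul_left (by linarith) htn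
  exact isLittleO_const_const_iff.1 hconst

theorem HasFPowerSeriesAt.apply_diag_eq_zero_of_isLittleO {f : E → F}
    {p : FormalMultilinearSeries 𝕜 E F} (hf : HasFPowerSeriesAt f p 0) {N : ℕ}
    (ho : f =o[𝓝 0] fun y => ‖y‖ ^ N) {k : ℕ} (hk : k ≤ N) (y : E) : (p k fun _ => y) = 0 := by
  induction k using Nat.strong_induction_on generalizing y with
  | _ k IH =>
  have hpartial : p.partialSum (k + 1) = fun y => p k fun _ => y := by
    funext z
    refine Finset.sum_eq_single_of_mem k (Finset.self_mem_range_succ k) fun j hj hjk => ?_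
    have hjk' := (Finset.mem_range_succ_iff.1 hj).lt_of_ne hjk
    exact IH j hjk' (by omega) z
  have hrem := hf.isBigO_sub_partialSum_pow (k + 1)
  simp only [zero_add, hpartial] at hrem
  have hfk : f =o[𝓝 0] fun y => ‖y‖ ^ k := by
    refine ho.trans_isBigO ?_
    rcases hk.lt_or_eq with hlt | rfl
    · exact (isLittleO_norm_pow_norm_pow hlt).isBigO
    · exact isBigO_refl _ _
  refine (p k).apply_diag_eq_zero_of_isLittleO ?_ y
  simpa using hfk.sub (hrem.trans_isLittleO (isLittleO_norm_pow_norm_pow k.lt_succ_self))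

theorem ContinuousMultilinearMap.norm_apply_diag_sub_le {n : ℕ} (q : E [×n]→L[𝕜] F) (a b : E) :
    ‖(q fun _ => a) - q fun _ => b‖ ≤ ‖q‖ * n * max ‖a‖ ‖b‖ ^ (n - 1) * ‖a - b‖ := by
  rcases n.eq_zero_or_pos with rfl | hn
  · simp [Subsingleton.elim (fun _ : Fin 0 => a) fun _ => b]
  · have : Nonempty (Fin n) := ⟨⟨0, hn⟩⟩
    simpa [pi_norm_const, Pi.sub_def] using q.norm_image_sub_le (fun _ => a) fun _ => b

theorem ContinuousMultilinearMap.norm_apply_diag_sub_mul_pow_le {N j : ℕ} (q : E [×j]→L[𝕜] F)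
    (hj : N < j) {a b : E} {δ : ℝ} (hδ : max ‖a‖ ‖b‖ ≤ δ) :
    ‖(q fun _ => a) - q fun _ => b‖ * δ ^ (N + 1)
      ≤ ‖q‖ * (2 * δ) ^ j * (max ‖a‖ ‖b‖ ^ N * ‖a - b‖) := by
  have hm : 0 ≤ max ‖a‖ ‖b‖ := (norm_nonneg a).trans (le_max_left _ _)
  have hδ0 : 0 ≤ δ ^ (N + 1) := pow_nonneg (hm.trans hδ) _
  calc ‖(q fun _ => a) - q fun _ => b‖ * δ ^ (N + 1)
      ≤ ‖q‖ * j * max ‖a‖ ‖b‖ ^ (j - 1) * ‖a - b‖ * δ ^ (N + 1) :=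
        mul_le_mul_of_nonneg_right (q.norm_apply_diag_sub_le a b) hδ0
    _ = ‖q‖ * ‖a - b‖ * (j * max ‖a‖ ‖b‖ ^ (j - 1) * δ ^ (N + 1)) := by ring
    _ ≤ ‖q‖ * ‖a - b‖ * ((2 * δ) ^ j * max ‖a‖ ‖b‖ ^ N) :=
        mul_le_mul_of_nonneg_left (natCast_mul_pow_pred_mul_pow_le hj hm hδ) (by positivity)
    _ = ‖q‖ * (2 * δ) ^ j * (max ‖a‖ ‖b‖ ^ N * ‖a - b‖) := by ring

theorem HasFPowerSeriesOnBall.exists_norm_sub_le_of_apply_diag_eq_zero {f : E → F}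
    {p : FormalMultilinearSeries 𝕜 E F} {ρ : ℝ≥0∞} (hf : HasFPowerSeriesOnBall f p 0 ρ) {N : ℕ}
    (hvan : ∀ k ≤ N, ∀ y, (p k fun _ => y) = 0) :
    ∃ C, ∃ δ > 0, ∀ a ∈ ball (0 : E) δ, ∀ b ∈ ball (0 : E) δ,
      ‖f a - f b‖ ≤ C * max ‖a‖ ‖b‖ ^ N * ‖a - b‖ := by
  obtain ⟨s, hs0, hsρ⟩ := ENNReal.lt_iff_exists_nnreal_btwn.1 hf.r_pos
  have hsum : Summable fun j => ‖p j‖ * (s : ℝ) ^ j :=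
    p.summable_norm_mul_pow (hsρ.trans_le hf.r_le)
  have hδ : (0 : ℝ) < s / 2 := half_pos (mod_cast hs0)
  refine ⟨(∑' j, ‖p j‖ * (s : ℝ) ^ j) / (s / 2) ^ (N + 1), s / 2, hδ, fun a ha b hb => ?_⟩
  rw [mem_ball_zero_iff] at ha hb
  have hmem : ∀ c : E, ‖c‖ < s / 2 → c ∈ eball (0 : E) ρ := fun c hc => by
    refine lt_of_le_of_lt ?_ hsρ
    rw [edist_zero_right, enorm_eq_nnnorm, ENNReal.coe_le_coe, ← NNReal.coe_le_coe, coe_nnnorm]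
    linarith
  have hdiff : HasSum (fun j => (p j fun _ => a) - p j fun _ => b) (f a - f b) := by
    simpa using (hf.hasSum (hmem a ha)).sub (hf.hasSum (hmem b hb))
  have hterm : ∀ j, ‖(p j fun _ => a) - p j fun _ => b‖
      ≤ ‖p j‖ * (s : ℝ) ^ j * (max ‖a‖ ‖b‖ ^ N * ‖a - b‖ / (s / 2) ^ (N + 1)) := by
    intro j
    rcases le_or_gt j N with hjN | hjN
    · rw [hvan j hjN, hvan j hjN, sub_self, norm_zero]
      positivity
    · rw [mul_div_assoc', le_div_iff₀ (by positivity)]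
      simpa [mul_div_cancel₀] using
        (p j).norm_apply_diag_sub_mul_pow_le hjN (max_le ha.le hb.le)
  calc ‖f a - f b‖
      ≤ (∑' j, ‖p j‖ * (s : ℝ) ^ j) * (max ‖a‖ ‖b‖ ^ N * ‖a - b‖ / (s / 2) ^ (N + 1)) := by
        rw [← hdiff.tsum_eq]
        exact tsum_of_norm_bounded (hsum.hasSum.mul_right _) hterm
    _ = (∑' j, ‖p j‖ * (s : ℝ) ^ j) / (s / 2) ^ (N + 1) * max ‖a‖ ‖b‖ ^ N * ‖a - b‖ := by ring

end Analytic

theorem norm_pow_sub_one_le {R : Type*} [NormedRing R] {t : R} (ht : ‖t‖ ≤ 1) (i : ℕ) :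
    ‖t ^ i - 1‖ ≤ i * ‖t - 1‖ := by
  induction i with
  | zero => simp
  | succ i ih =>
    calc ‖t ^ (i + 1) - 1‖ = ‖t * (t ^ i - 1) + (t - 1)‖ := by rw [pow_succ']; congr 1; noncomm_ring
      _ ≤ ‖t‖ * ‖t ^ i - 1‖ + ‖t - 1‖ := (norm_add_le _ _).trans (by gcongr; exact norm_mul_le _ _)
      _ ≤ 1 * (i * ‖t - 1‖) + ‖t - 1‖ := by gcongr
      _ = (i + 1 : ℕ) * ‖t - 1‖ := by push_cast; ring

section RCLike

variable {𝕜 : Type*} [RCLike 𝕜]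

theorem half_mul_norm_sub_one_le_norm_pow_sub_one {N : ℕ} {t : 𝕜} (ht : ‖t‖ ≤ 1)
    (ht1 : 2 * N * ‖t - 1‖ ≤ 1) : N / 2 * ‖t - 1‖ ≤ ‖t ^ N - 1‖ := by
  have hgeom : ∑ i ∈ Finset.range N, t ^ i = N + ∑ i ∈ Finset.range N, (t ^ i - 1) := by
    simp [Finset.sum_sub_distrib]
  have herr : ‖∑ i ∈ Finset.range N, (t ^ i - 1)‖ ≤ N * (N * ‖t - 1‖) := by
    refine (norm_sum_le _ _).trans ?_
    calc ∑ i ∈ Finset.range N, ‖t ^ i - 1‖ ≤ ∑ _i ∈ Finset.range N, N * ‖t - 1‖ := by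
          refine Finset.sum_le_sum fun i hi => (norm_pow_sub_one_le ht i).trans ?_
          gcongr; exact_mod_cast (Finset.mem_range.1 hi).le
      _ = N * (N * ‖t - 1‖) := by simp
  have hsum : (N : ℝ) / 2 ≤ ‖∑ i ∈ Finset.range N, t ^ i‖ := by
    rw [hgeom]
    have := norm_sub_norm_le (N : 𝕜) (-∑ i ∈ Finset.range N, (t ^ i - 1))
    rw [sub_neg_eq_add, norm_neg, RCLike.norm_natCast] at this
    nlinarith [Nat.cast_nonneg (α := ℝ) N]
  rw [← geom_sum_mul, norm_mul]
  exact mul_le_mul_of_nonneg_right hsum (norm_nonneg _)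

theorem norm_pow_sub_pow_lower_bound {N : ℕ} {a b : 𝕜} (hab : ‖a‖ ≤ ‖b‖)
    (hclose : 2 * N * ‖a - b‖ ≤ ‖b‖) : N / 2 * ‖b‖ ^ N * ‖a - b‖ ≤ ‖b‖ * ‖a ^ N - b ^ N‖ := by
  rcases eq_or_ne b 0 with rfl | hb
  · simp [norm_le_zero_iff.1 (by simpa using hab)]
  have hb' : 0 < ‖b‖ := norm_pos_iff.2 hb
  set t := a / b
  have ha : a = t * b := (div_mul_cancel₀ a hb).symm
  have hdiff : a - b = (t - 1) * b := by rw [ha]; ring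
  have hpow : a ^ N - b ^ N = (t ^ N - 1) * b ^ N := by rw [ha]; ring
  rw [hdiff, norm_mul] at hclose ⊢
  rw [hpow, norm_mul, norm_pow]
  have ht : ‖t‖ ≤ 1 := by rw [norm_div, div_le_one hb']; exact hab
  have ht1 : 2 * N * ‖t - 1‖ ≤ 1 := by nlinarith
  have := half_mul_norm_sub_one_le_norm_pow_sub_one ht ht1
  calc (N : ℝ) / 2 * ‖b‖ ^ N * (‖t - 1‖ * ‖b‖) = ‖b‖ * ‖b‖ ^ N * (N / 2 * ‖t - 1‖) := by ring
    _ ≤ ‖b‖ * ‖b‖ ^ N * ‖t ^ N - 1‖ := by gcongr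
    _ = ‖b‖ * (‖t ^ N - 1‖ * ‖b‖ ^ N) := by ring

theorem injOn_ball_of_pow_eq_pow_add {N : ℕ} {h w : 𝕜 → 𝕜} {C r : ℝ}
    (hpow : ∀ z ∈ ball (0 : 𝕜) r, w z ^ N = z ^ N + h z)
    (hlip : ∀ a ∈ ball (0 : 𝕜) r, ∀ b ∈ ball (0 : 𝕜) r,
      ‖h a - h b‖ ≤ C * max ‖a‖ ‖b‖ ^ N * ‖a - b‖)
    (hclose : ∀ z ∈ ball (0 : 𝕜) r, 4 * N * ‖w z - z‖ ≤ ‖z‖)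
    (hsmall : ∀ z ∈ ball (0 : 𝕜) r, 2 * C * ‖z‖ < N) : InjOn w (ball 0 r) := by
  suffices key : ∀ a ∈ ball (0 : 𝕜) r, ∀ b ∈ ball (0 : 𝕜) r, ‖a‖ ≤ ‖b‖ → w a = w b → a = b by
    intro a ha b hb hab
    rcases le_total ‖a‖ ‖b‖ with hle | hle
    · exact key a ha b hb hle hab
    · exact (key b hb a ha hle hab.symm).symm
  intro a ha b hb hle hwab
  by_contra hne
  have hab : 0 < ‖a - b‖ := norm_pos_iff.2 (sub_ne_zero.2 hne)
  have hb0 : 0 < ‖b‖ := by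
    by_contra! hb
    exact hne (by rw [norm_le_zero_iff.1 (hle.trans hb), norm_le_zero_iff.1 hb])
  have hnear : 2 * N * ‖a - b‖ ≤ ‖b‖ := by
    have hsplit : a - b = (w b - b) - (w a - a) := by rw [hwab]; ring
    have := norm_sub_le (w b - b) (w a - a)
    rw [← hsplit] at this
    nlinarith [hclose a ha, hclose b hb, Nat.cast_nonneg (α := ℝ) N]
  have heq : a ^ N - b ^ N = h b - h a := by
    have ha' := hpow a ha
    rw [hwab] at ha'
    linear_combination hpow b hb - ha'
  have hupper : ‖a ^ N - b ^ N‖ ≤ C * ‖b‖ ^ N * ‖a - b‖ := by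
    simpa [heq, max_eq_left hle, norm_sub_rev b a] using hlip b hb a ha
  have hlower := norm_pow_sub_pow_lower_bound hle hnear
  nlinarith [mul_pos (pow_pos hb0 N) hab, hsmall b hb]

theorem exists_injOn_ball_of_pow_eq_pow_add {N : ℕ} (hN : N ≠ 0) {h w : 𝕜 → 𝕜} {C δ : ℝ}
    (hδ : 0 < δ) (hlip : ∀ a ∈ ball (0 : 𝕜) δ, ∀ b ∈ ball (0 : 𝕜) δ,
      ‖h a - h b‖ ≤ C * max ‖a‖ ‖b‖ ^ N * ‖a - b‖)
    (hpow : ∀ z, w z ^ N = z ^ N + h z) (hw : (fun z => w z - z) =o[𝓝 0] fun z => z) :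
    ∃ r > 0, InjOn w (ball 0 r) ∧ ∀ z ∈ ball (0 : 𝕜) r, 2 * ‖w z - z‖ ≤ ‖z‖ := by
  have hN0 : (0 : ℝ) < N := by exact_mod_cast Nat.pos_of_ne_zero hN
  have hC : Tendsto (fun z : 𝕜 => 2 * C * ‖z‖) (𝓝 0) (𝓝 0) := by
    simpa using tendsto_norm_zero.const_mul (2 * C)
  have hnear := hw.def (by positivity : (0 : ℝ) < (4 * (N : ℝ))⁻¹)
  have hhalf := hw.def (by norm_num : (0 : ℝ) < 2⁻¹)
  obtain ⟨r, hr, hball⟩ := eventually_nhds_iff_ball.1 <| Eventually.and (ball_mem_nhds 0 hδ) <|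
    hnear.and <| hhalf.and (hC.eventually (gt_mem_nhds hN0))
  refine ⟨r, hr, injOn_ball_of_pow_eq_pow_add (fun z _ => hpow z)
    (fun a ha b hb => hlip a (hball a ha).1 b (hball b hb).1) (fun z hz => ?_)
    (fun z hz => (hball z hz).2.2.2), fun z hz => ?_⟩
  · have := (hball z hz).2.1
    rw [inv_mul_eq_div, le_div_iff₀ (by positivity)] at this
    linarith
  · linarith [(hball z hz).2.2.1]

end RCLike

theorem isLittleO_piecewise_invFunOn_sub {E : Type*} [NormedAddCommGroup E] {w : E → E}
    {s : Set E} [DecidablePred (· ∈ w '' s)] (hs : ∀ z ∈ s, 2 * ‖w z - z‖ ≤ ‖z‖)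
    (hw : (fun z => w z - z) =o[𝓝 0] fun z => z) :
    (fun u => (w '' s).piecewise (invFunOn w s) id u - u) =o[𝓝 0] fun u => u := by
  refine isLittleO_iff.2 fun c hc => ?_
  obtain ⟨δ, hδ, hδw⟩ := Metric.eventually_nhds_iff_ball.1 (hw.def (half_pos hc))
  filter_upwards [ball_mem_nhds (0 : E) (half_pos hδ)] with u hu
  rw [mem_ball_zero_iff] at hu
  by_cases hmem : u ∈ w '' s
  · obtain ⟨x, hx, rfl⟩ := hmem
    set z := invFunOn w s (w x)
    have hz : z ∈ s := invFunOn_mem ⟨x, hx, rfl⟩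
    have hwz : w z = w x := invFunOn_eq ⟨x, hx, rfl⟩
    have hzu : ‖z‖ ≤ 2 * ‖w x‖ := by
      rw [← hwz]
      linarith [hs z hz, norm_sub_norm_le z (w z), norm_sub_rev z (w z)]
    have := hδw z (mem_ball_zero_iff.2 (by linarith))
    rw [piecewise_eq_of_mem _ _ _ (mem_image_of_mem w hx)]
    calc ‖z - w x‖ = ‖w z - z‖ := by rw [hwz, norm_sub_rev]
      _ ≤ c / 2 * ‖z‖ := this
      _ ≤ c / 2 * (2 * ‖w x‖) := by gcongr
      _ = c * ‖w x‖ := by ring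
  · simp [piecewise_eq_of_notMem _ _ _ hmem]
    positivity

noncomputable def normalizingCoord (N : ℕ) (h : ℂ → ℂ) (z : ℂ) : ℂ :=
  z * (1 + h z / z ^ N) ^ (N⁻¹ : ℂ)

theorem normalizingCoord_pow {N : ℕ} (hN : N ≠ 0) {h : ℂ → ℂ} (h0 : h 0 = 0) (z : ℂ) :
    normalizingCoord N h z ^ N = z ^ N + h z := by
  rcases eq_or_ne z 0 with rfl | hz
  · simp [normalizingCoord, h0, hN]
  · rw [normalizingCoord, mul_pow, Complex.cpow_nat_inv_pow _ hN]
    field_simp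

theorem isLittleO_normalizingCoord_sub {N : ℕ} {h : ℂ → ℂ} (ho : h =o[𝓝 0] fun z => z ^ N) :
    (fun z => normalizingCoord N h z - z) =o[𝓝 0] fun z => z := by
  have hroot : Tendsto (fun z => (1 + h z / z ^ N) ^ (N⁻¹ : ℂ)) (𝓝 0) (𝓝 1) := by
    have h1 : Tendsto (fun z => 1 + h z / z ^ N) (𝓝 0) (𝓝 1) := by
      simpa using ho.tendsto_div_nhds_zero.const_add 1
    simpa [Function.comp_def] using
      (continuousAt_cpow_const (b := (N⁻¹ : ℂ)) Complex.one_mem_slitPlane).tendsto.comp h1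
  have hsmall : (fun z => (1 + h z / z ^ N) ^ (N⁻¹ : ℂ) - 1) =o[𝓝 (0 : ℂ)] fun _ => (1 : ℂ) :=
    (isLittleO_one_iff ℂ).2 (by simpa using hroot.sub_const 1)
  simpa [normalizingCoord, mul_sub] using (isBigO_refl (fun z : ℂ => z) (𝓝 0)).mul_isLittleO hsmall

/-- Normalization of a branched immersion near a branch point: if h is
real-analytic on the unit disk with h(z) = o(|z|^N), then there are r > 0 and
w : 𝔻_r → ℂ with w(z)^N = z^N + h(z), w(z) = z + o(|z|), w injective near 0,
and an inverse g with g(w(z)) = z and g(u) = u + o(|u|). -/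
theorem stmt13 (N : ℕ) (hN : 2 ≤ N) (h : ℂ → ℂ)
    (hA : AnalyticOnNhd ℝ h (Metric.ball 0 1))
    (ho : (fun z : ℂ => h z) =o[nhds (0 : ℂ)] fun z : ℂ => z ^ N) :
    ∃ r > (0 : ℝ), ∃ w : ℂ → ℂ,
      (∀ z : ℂ, ‖z‖ < r → w z ^ N = z ^ N + h z) ∧
      (fun z : ℂ => w z - z) =o[nhds (0 : ℂ)] (fun z : ℂ => z) ∧
      (∃ r' > (0 : ℝ), Set.InjOn w (Metric.ball 0 r')) ∧
      ∃ g : ℂ → ℂ, (∀ z : ℂ, ‖z‖ < r → g (w z) = z) ∧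
        (fun u : ℂ => g u - u) =o[nhds (0 : ℂ)] (fun u : ℂ => u) := by
  classical
  obtain ⟨p, ρ, hp⟩ := hA 0 (mem_ball_self one_pos)
  have hvan : ∀ k ≤ N, ∀ y, (p k fun _ => y) = 0 := fun k hk =>
    hp.hasFPowerSeriesAt.apply_diag_eq_zero_of_isLittleO (by simpa using ho.norm_right) hk
  obtain ⟨C, δ, hδ, hlip⟩ := hp.exists_norm_sub_le_of_apply_diag_eq_zero hvan
  have hpow : ∀ z, normalizingCoord N h z ^ N = z ^ N + h z :=
    normalizingCoord_pow (by omega) ((hp.coeff_zero _).symm.trans (hvan 0 N.zero_le 0))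
  have hw := isLittleO_normalizingCoord_sub ho
  obtain ⟨r, hr, hinj, hhalf⟩ := exists_injOn_ball_of_pow_eq_pow_add (by omega) hδ hlip hpow hw
  refine ⟨r, hr, normalizingCoord N h, fun z _ => hpow z, hw, ⟨r, hr, hinj⟩,
    (normalizingCoord N h '' ball 0 r).piecewise (invFunOn (normalizingCoord N h) (ball 0 r)) id,
    fun z hz => ?_, isLittleO_piecewise_invFunOn_sub hhalf hw⟩
  rw [← mem_ball_zero_iff] at hz
  rw [piecewise_eq_of_mem _ _ _ (mem_image_of_mem _ hz)]
  exact hinj.leftInvOn_invFunOn hz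
end
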